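/- Let mu(n) = min{ l >= 1 : there exist positive integers u_1,...,u_l with n = sum_{j=1}^l (2^{u_j} - 1) } for a positive integer n. Then mu(n) is also equal to min{ l >= 1 : alpha(n + l) <= l }, where alpha denotes the binary digit sum. -/

import Mathlib

/-!
Writing `u_j = v_j + 1`, we have `n = ∑_{j < l} (2^{u_j} - 1)` iff `n + l = 2k` with `k` a sum of
`l` powers of two, and `k` is a sum of exactly `l` powers of two iff `alpha k ≤ l ≤ k`. So the
`l` admitted in `mu n` are those with `n + l` even, `alpha (n + l) ≤ l` and `l ≤ n`. The least `l`
with `alpha (n + l) ≤ l` has the two extra properties: `l ≤ n` since `alpha (2n) = alpha n ≤ n`,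
and `n + l` is even, for otherwise `alpha (n + l - 1) = alpha (n + l) - 1` and `l - 1` would
qualify.
-/

def alpha (n : ℕ) : ℕ := (Nat.digits 2 n).sum

/-- Minimal number of summands of the form `2^u - 1` (with `u > 0`) needed for `n`. -/
noncomputable def mu (n : ℕ) : ℕ :=
  sInf {l : ℕ | 1 ≤ l ∧ ∃ u : Fin l → ℕ, (∀ j, 0 < u j) ∧ n = ∑ j, (2 ^ (u j) - 1)}

open scoped Nat

lemma alpha_le_self (m : ℕ) : alpha m ≤ m := Nat.digit_sum_le 2 m

lemma alpha_add_padicValNat_factorial (m : ℕ) : alpha m + padicValNat 2 m ! = m := by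
  have := sub_one_mul_padicValNat_factorial (p := 2) m
  have := alpha_le_self m
  simp only [alpha] at *
  omega

lemma alpha_pos {m : ℕ} (hm : m ≠ 0) : 0 < alpha m := by
  have := padicValNat_factorial_lt_of_ne_zero 2 hm
  have := alpha_add_padicValNat_factorial m
  omega

-- Legendre's formula `alpha m = m - v₂(m!)` reduces this to `a! b! ∣ (a + b)!`.
lemma alpha_add_le (a b : ℕ) : alpha (a + b) ≤ alpha a + alpha b := by
  have hval : padicValNat 2 a ! + padicValNat 2 b ! ≤ padicValNat 2 (a + b)! := by
    rw [← padicValNat.mul (Nat.factorial_ne_zero a) (Nat.factorial_ne_zero b)]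
    exact padicValNat_dvd_iff_le (Nat.factorial_ne_zero _) |>.1
      ((pow_padicValNat_dvd).trans (Nat.factorial_mul_factorial_dvd_factorial_add a b))
  have := alpha_add_padicValNat_factorial a
  have := alpha_add_padicValNat_factorial b
  have := alpha_add_padicValNat_factorial (a + b)
  omega

lemma alpha_sum_le {ι : Type*} (s : Finset ι) (f : ι → ℕ) :
    alpha (∑ i ∈ s, f i) ≤ ∑ i ∈ s, alpha (f i) :=
  Finset.le_sum_of_subadditive alpha (by simp [alpha]) alpha_add_le s f

lemma alpha_two_mul (m : ℕ) : alpha (2 * m) = alpha m := by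
  rcases m.eq_zero_or_pos with rfl | hm
  · rfl
  · simp [alpha, Nat.digits_base_mul one_lt_two hm]

lemma alpha_two_mul_add_one (m : ℕ) : alpha (2 * m + 1) = alpha m + 1 := by
  simp [alpha, Nat.add_mul_div_left, add_comm]

lemma alpha_two_pow (k : ℕ) : alpha (2 ^ k) = 1 := by
  induction k with
  | zero => simp [alpha]
  | succ k ih => rw [pow_succ', alpha_two_mul, ih]

def IsSumOfTwoPows (l m : ℕ) : Prop := ∃ u : Fin l → ℕ, ∑ j, 2 ^ u j = m

namespace IsSumOfTwoPows

variable {l m : ℕ}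

lemma alpha_le (h : IsSumOfTwoPows l m) : alpha m ≤ l := by
  obtain ⟨u, rfl⟩ := h
  calc alpha (∑ j, 2 ^ u j) ≤ ∑ j, alpha (2 ^ u j) := alpha_sum_le _ _
    _ = l := by simp [alpha_two_pow]

lemma le (h : IsSumOfTwoPows l m) : l ≤ m := by
  obtain ⟨u, rfl⟩ := h
  calc l = ∑ _j : Fin l, 1 := by simp
    _ ≤ ∑ j, 2 ^ u j := Finset.sum_le_sum fun j _ => Nat.one_le_two_pow

lemma add_one (h : IsSumOfTwoPows l m) : IsSumOfTwoPows (l + 1) (m + 1) := by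
  obtain ⟨u, rfl⟩ := h
  exact ⟨Fin.cons 0 u, by simp [Fin.sum_univ_succ, add_comm]⟩

lemma two_mul (h : IsSumOfTwoPows l m) : IsSumOfTwoPows l (2 * m) := by
  obtain ⟨u, rfl⟩ := h
  exact ⟨fun j => u j + 1, by simp [Finset.mul_sum, pow_succ']⟩

end IsSumOfTwoPows

-- Peel off a summand `1` unless `m = 2k` with `l ≤ k`, in which case halve.
lemma isSumOfTwoPows_of_alpha_le {l m : ℕ} (hα : alpha m ≤ l) (hl : l ≤ m) :
    IsSumOfTwoPows l m := by
  induction m using Nat.strong_induction_on generalizing l with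
  | _ m ih =>
  rcases Nat.eq_zero_or_pos m with rfl | hm
  · obtain rfl : l = 0 := by omega
    exact ⟨Fin.elim0, rfl⟩
  obtain ⟨l, rfl⟩ : ∃ l', l = l' + 1 := Nat.exists_eq_add_one.2 ((alpha_pos hm.ne').trans_le hα)
  obtain ⟨k, rfl | rfl⟩ := Nat.even_or_odd' m
  · by_cases hlk : l + 1 ≤ k
    · exact (ih k (by omega) (by rwa [alpha_two_mul] at hα) hlk).two_mul
    · obtain ⟨k, rfl⟩ : ∃ k', k = k' + 1 := Nat.exists_eq_add_one.2 (by omega)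
      have hα' : alpha (2 * k + 1) ≤ l := by
        rw [alpha_two_mul_add_one]; have := alpha_le_self k; omega
      simpa [mul_add, add_assoc] using (ih (2 * k + 1) (by omega) hα' (by omega)).add_one
  · refine (ih (2 * k) (by omega) ?_ (by omega)).add_one
    rw [alpha_two_mul_add_one] at hα; rw [alpha_two_mul]; omega

lemma isSumOfTwoPows_iff {l m : ℕ} : IsSumOfTwoPows l m ↔ alpha m ≤ l ∧ l ≤ m :=
  ⟨fun h => ⟨h.alpha_le, h.le⟩, fun h => isSumOfTwoPows_of_alpha_le h.1 h.2⟩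

lemma sum_two_pow_sub_one_add_card {l : ℕ} (u : Fin l → ℕ) :
    ∑ j, (2 ^ u j - 1) + l = ∑ j, 2 ^ u j := by
  calc ∑ j, (2 ^ u j - 1) + l = ∑ j, (2 ^ u j - 1 + 1) := by simp [Finset.sum_add_distrib]
    _ = ∑ j, 2 ^ u j := Finset.sum_congr rfl fun j _ => Nat.sub_add_cancel Nat.one_le_two_pow

lemma exists_sum_two_pow_sub_one_iff_isSumOfTwoPows {n l : ℕ} :
    (∃ u : Fin l → ℕ, (∀ j, 0 < u j) ∧ n = ∑ j, (2 ^ u j - 1)) ↔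
      ∃ k, n + l = 2 * k ∧ IsSumOfTwoPows l k := by
  constructor
  · rintro ⟨u, hu, rfl⟩
    refine ⟨_, ?_, fun j => u j - 1, rfl⟩
    rw [sum_two_pow_sub_one_add_card, Finset.mul_sum]
    exact Finset.sum_congr rfl fun j _ => by
      rw [← pow_succ', Nat.sub_add_cancel (hu j)]
  · rintro ⟨k, hk, v, rfl⟩
    refine ⟨fun j => v j + 1, fun j => Nat.succ_pos _, ?_⟩
    have hsub := sum_two_pow_sub_one_add_card fun j => v j + 1
    have hsucc : ∑ j, 2 ^ (v j + 1) = 2 * ∑ j, 2 ^ v j := by simp [pow_succ', Finset.mul_sum]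
    simp only at hsub ⊢
    omega

lemma exists_sum_two_pow_sub_one_iff {n l : ℕ} :
    (∃ u : Fin l → ℕ, (∀ j, 0 < u j) ∧ n = ∑ j, (2 ^ u j - 1)) ↔
      Even (n + l) ∧ alpha (n + l) ≤ l ∧ l ≤ n := by
  rw [exists_sum_two_pow_sub_one_iff_isSumOfTwoPows]
  constructor
  · rintro ⟨k, hk, hrep⟩
    obtain ⟨hα, hl⟩ := isSumOfTwoPows_iff.1 hrep
    exact ⟨⟨k, by omega⟩, by rwa [hk, alpha_two_mul], by omega⟩
  · rintro ⟨⟨k, hk⟩, hα, hl⟩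
    rw [hk, ← two_mul, alpha_two_mul] at hα
    exact ⟨k, by omega, isSumOfTwoPows_iff.2 ⟨hα, by omega⟩⟩

lemma alpha_add_sub_one_le_of_odd {n l : ℕ} (hn : 0 < n) (hα : alpha (n + l) ≤ l)
    (hodd : Odd (n + l)) : 1 ≤ l - 1 ∧ alpha (n + (l - 1)) ≤ l - 1 := by
  obtain ⟨k, hk⟩ := hodd
  rw [hk, alpha_two_mul_add_one] at hα
  have hk0 : k ≠ 0 := by
    rintro rfl
    have : alpha 1 = 1 := alpha_two_pow 0
    omega
  have := alpha_pos hk0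
  rw [show n + (l - 1) = 2 * k by omega, alpha_two_mul]
  omega

theorem mu_eq_min_alpha (n : ℕ) (hn : 0 < n) :
    mu n = sInf {l : ℕ | 1 ≤ l ∧ alpha (n + l) ≤ l} := by
  set B := {l : ℕ | 1 ≤ l ∧ alpha (n + l) ≤ l}
  have hnB : n ∈ B := ⟨hn, by rw [← two_mul, alpha_two_mul]; exact alpha_le_self n⟩
  obtain ⟨hB₁, hBα⟩ : sInf B ∈ B := Nat.sInf_mem ⟨n, hnB⟩
  have hBeven : Even (n + sInf B) := by
    by_contra hodd
    have := Nat.sInf_le (show sInf B - 1 ∈ B from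
      alpha_add_sub_one_le_of_odd hn hBα (Nat.not_even_iff_odd.1 hodd))
    omega
  have hBmu : sInf B ∈
      {l : ℕ | 1 ≤ l ∧ ∃ u : Fin l → ℕ, (∀ j, 0 < u j) ∧ n = ∑ j, (2 ^ (u j) - 1)} :=
    ⟨hB₁, exists_sum_two_pow_sub_one_iff.2 ⟨hBeven, hBα, Nat.sInf_le hnB⟩⟩
  obtain ⟨hmu₁, hmu⟩ := Nat.sInf_mem ⟨_, hBmu⟩
  obtain ⟨-, hmuα, -⟩ := exists_sum_two_pow_sub_one_iff.1 hmu
  exact le_antisymm (Nat.sInf_le hBmu) (Nat.sInf_le ⟨hmu₁, hmuα⟩)
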